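/- If a tree T is not accepted by A_{▷E}, then there exists a blocking pair (F,g) for T such that for every minimal accepting execution tree of A_{▷F} on T with induced unitary marking ν of the root's successors, every successor y with ν(y) = q⊤ has its subtree T_y rejected by A_{g'} for every g' ∈ F ⊎ {g}. -/

import Mathlib

/-- A `Σ`-labelled tree of arbitrary (finite) arity over direction set `D`:
a prefix-closed set of nodes (words over `D`) containing the root, with a labelling. -/
structure STree (D : Type) (A : Type) where
  nodes : Set (List D)
  root_mem : ([] : List D) ∈ nodes
  prefix_closed : ∀ n d, n ++ [d] ∈ nodes → n ∈ nodes
  label : List D → A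

/-- Positive Boolean combinations over atoms `α`. -/
inductive PBF (α : Type) : Type
  | tru : PBF α
  | fls : PBF α
  | atom : α → PBF α
  | and : PBF α → PBF α → PBF α
  | or : PBF α → PBF α → PBF α

def PBF.map {α β : Type} (f : α → β) : PBF α → PBF β
  | .tru => .tru
  | .fls => .fls
  | .atom a => .atom (f a)
  | .and φ ψ => .and (φ.map f) (ψ.map f)
  | .or φ ψ => .or (φ.map f) (ψ.map f)

/-- An EU-pair over state set `Q`: a multiset `E` of states and a set `U` of states. -/
abbrev EUPair (Q : Type) := Multiset Q × Set Q

def EUPair.map {Q Q' : Type} (f : Q → Q') (p : EUPair Q) : EUPair Q' :=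
  (p.1.map f, f '' p.2)

/-- The marking `ν` of the `children` satisfies the EU-pair `p` (relation `⊨⁺`):
some unitary submarking `f` of `ν` matches the existential part `p.1` on a family
`m` of pairwise distinct children and maps every other child into `p.2`. -/
def SatEU {D Q : Type} (children : Set D) (ν : D → Set Q) (p : EUPair Q) : Prop :=
  ∃ f : D → Q, (∀ d ∈ children, f d ∈ ν d) ∧
    ∃ m : Multiset D, m.Nodup ∧ (∀ d ∈ m, d ∈ children) ∧
      m.map f = p.1 ∧ ∀ d ∈ children, d ∉ m → f d ∈ p.2

/-- `⊨⁺` extended to positive Boolean combinations of EU-pairs. -/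
def SatPBF {D Q : Type} (children : Set D) (ν : D → Set Q) : PBF (EUPair Q) → Prop
  | .tru => True
  | .fls => False
  | .atom p => SatEU children ν p
  | .and φ ψ => SatPBF children ν φ ∧ SatPBF children ν ψ
  | .or φ ψ => SatPBF children ν φ ∨ SatPBF children ν ψ

/-- Alternating EU parity tree automaton over alphabet `A`. -/
structure APTA (A : Type) where
  Q : Type
  init : Q
  δ : Q → A → PBF (EUPair Q)
  ω : Q → ℕ

/-- Parity acceptance for an infinite sequence of priorities: the least priority
occurring infinitely often is even. -/
def ParitySeq (s : ℕ → ℕ) : Prop :=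
  Even (sInf {c | {k | s k = c}.Infinite})

namespace APTA

variable {A D : Type}

/-- The automaton state attached to a node of an execution tree. -/
def stateOf (M : APTA A) (e : List (D × M.Q)) : M.Q :=
  match e.getLast? with
  | none => M.init
  | some p => p.2

/-- `et` is an execution tree of `M` over the input tree `T`: a prefix-closed set of
words over `D × Q`, rooted at `[]` (in state `init`), projecting into `T`,
whose induced markings satisfy the transition function everywhere. -/
def IsExecTree (M : APTA A) (T : STree D A) (et : Set (List (D × M.Q))) : Prop :=
  ([] ∈ et) ∧ (∀ e p, e ++ [p] ∈ et → e ∈ et) ∧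
  (∀ e ∈ et, e.map Prod.fst ∈ T.nodes) ∧
  (∀ e ∈ et,
    SatPBF {d | (e.map Prod.fst) ++ [d] ∈ T.nodes}
      (fun d => {q | e ++ [(d, q)] ∈ et})
      (M.δ (M.stateOf e) (T.label (e.map Prod.fst))))

/-- `T` is accepted by `M`: some execution tree all of whose infinite branches
satisfy the parity condition. (Finite branches are accepting.) -/
def Accepts (M : APTA A) (T : STree D A) : Prop :=
  ∃ et : Set (List (D × M.Q)), M.IsExecTree T et ∧
    ∀ b : ℕ → D × M.Q, (∀ k, (List.range k).map b ∈ et) →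
      ParitySeq (fun k => M.ω (b k).2)

/-- The automaton `M` with initial state replaced by `q`. -/
def withInit (M : APTA A) (q : M.Q) : APTA A := { M with init := q }

end APTA

/-- The subtree of `T` rooted at node `n0`. -/
def STree.subAt {D A : Type} (T : STree D A) (n0 : List D) (h : n0 ∈ T.nodes) :
    STree D A where
  nodes := {m | n0 ++ m ∈ T.nodes}
  root_mem := by simpa using h
  prefix_closed := by
    intro n d hm
    have hm' : (n0 ++ n) ++ [d] ∈ T.nodes := by
      simpa [List.append_assoc] using hm
    exact T.prefix_closed (n0 ++ n) d hm'
  label := fun m => T.label (n0 ++ m)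

/-- The subtree of `T` rooted at the successor `d` of the root is accepted by `M`
started in state `q` (false when `d` is not a successor of the root). -/
def AccChild {A D : Type} (M : APTA A) (q : M.Q) (T : STree D A) (d : D) : Prop :=
  ∃ h : [d] ∈ T.nodes, (M.withInit q).Accepts (T.subAt [d] h)

/-- The automaton `A_{▷E}`: a fresh initial state whose transition (on every letter)
is the EU-pair `⟨E;{q⊤}⟩`, the rest of `M` unchanged. -/
def arrow {A : Type} (M : APTA A) (qT : M.Q) (E : Multiset M.Q) : APTA A where
  Q := Option M.Q
  init := none
  δ := fun q a =>
    match q with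
    | none => PBF.atom (E.map some, ({some qT} : Set (Option M.Q)))
    | some q => (M.δ q a).map (EUPair.map some)
  ω := fun q =>
    match q with
    | none => 0
    | some q => M.ω q

/-- The automaton `A_{▷⟨E;U⟩}`: fresh initial state with transition `⟨E;U⟩`. -/
def arrowEU {A : Type} (M : APTA A) (E : Multiset M.Q) (U : Set M.Q) : APTA A where
  Q := Option M.Q
  init := none
  δ := fun q a =>
    match q with
    | none => PBF.atom (E.map some, some '' U)
    | some q => (M.δ q a).map (EUPair.map some)
  ω := fun q =>
    match q with
    | none => 0
    | some q => M.ω q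

/-- A witness (minimal accepting execution tree, restricted to the root level) for
`A_{▷F}` on `T`: pairwise-distinct successors of the root matched with the states
of `F`, each accepting the corresponding subtree. -/
def Witness {A D : Type} (M : APTA A) (T : STree D A) (F : Multiset M.Q)
    (m : Multiset (D × M.Q)) : Prop :=
  (m.map Prod.fst).Nodup ∧ m.map Prod.snd = F ∧ ∀ p ∈ m, AccChild M p.2 T p.1

/-!
Acceptance of `T` by `A_{▷G}` amounts to a matching of the multiset `G` into the successors of
the root, where a successor `y` may receive the state `q` iff `A_q` accepts `T_y`; successors
left unmatched are accepted by `q⊤`. The question is therefore about matchings of multisets.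
Take `G ≤ E` minimal among the multisets that cannot be matched. Every state of `G` has only
finitely many admissible successors (otherwise `G` could be matched), so Hall's theorem and
minimality show that all states of `G` together have fewer than `|G|` admissible successors.
Removing one copy of some `g` from `G` leaves a matchable `F`, while for `q ∈ G` the multiset
`F + {q}` has `|G|` elements whose admissible successors are fewer than `|G|`. A successor
left over by a witness for `F` that accepted some `g' ∈ F + {g}` would extend the witness to a
matching of `F + {g'}`.
-/

section Matching

variable {D Q : Type} {R : D → Q → Prop}

def IsMatching (R : D → Q → Prop) (m : Multiset (D × Q)) (G : Multiset Q) : Prop :=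
  (m.map Prod.fst).Nodup ∧ m.map Prod.snd = G ∧ ∀ p ∈ m, R p.1 p.2

def Matchable (R : D → Q → Prop) (G : Multiset Q) : Prop :=
  ∃ m, IsMatching R m G

theorem IsMatching.cons {m : Multiset (D × Q)} {G : Multiset Q} {y : D} {q : Q}
    (hm : IsMatching R m G) (hy : y ∉ m.map Prod.fst) (hR : R y q) :
    IsMatching R ((y, q) ::ₘ m) (q ::ₘ G) := by
  obtain ⟨hnd, hsnd, hm⟩ := hm
  refine ⟨?_, by simp [hsnd], ?_⟩
  · simpa using Multiset.nodup_cons.mpr ⟨hy, hnd⟩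
  · simpa [hR] using hm

theorem matchable_zero : Matchable R 0 :=
  ⟨0, by simp [IsMatching]⟩

theorem Matchable.cons_of_infinite {G : Multiset Q} {q : Q} (hG : Matchable R G)
    (hq : {y | R y q}.Infinite) : Matchable R (q ::ₘ G) := by
  classical
  obtain ⟨m, hm⟩ := hG
  obtain ⟨y, hRy, hy⟩ := hq.exists_notMem_finset (m.map Prod.fst).toFinset
  exact ⟨_, hm.cons (by simpa using hy) hRy⟩

theorem Matchable.card_le {G : Multiset Q} (hG : Matchable R G) (N : Finset D)
    (hN : ∀ q ∈ G, ∀ y, R y q → y ∈ N) : Multiset.card G ≤ N.card := by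
  classical
  obtain ⟨m, hnd, rfl, hR⟩ := hG
  calc Multiset.card (m.map Prod.snd) = (m.map Prod.fst).toFinset.card := by
        simp [Multiset.toFinset_card_of_nodup hnd]
    _ ≤ N.card := Finset.card_le_card fun y hy => by
        obtain ⟨p, hp, rfl⟩ := Multiset.mem_map.mp (Multiset.mem_toFinset.mp hy)
        exact hN p.2 (Multiset.mem_map_of_mem _ hp) p.1 (hR p hp)

theorem matchable_of_injective [DecidableEq Q] {G : Multiset Q} (f : G → D)
    (hf : Function.Injective f) (hR : ∀ x : G, R (f x) x) : Matchable R G := by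
  refine ⟨(Finset.univ : Finset G).val.map fun x => (f x, (x : Q)), ?_, ?_, ?_⟩
  · simpa [Multiset.map_map] using Finset.univ.nodup.map hf
  · simp [Multiset.map_map]
  · intro p hp
    obtain ⟨x, -, rfl⟩ := Multiset.mem_map.mp hp
    exact hR x

theorem exists_card_lt_of_minimal_not_matchable {G : Multiset Q}
    (hG : Minimal (fun G => ¬ Matchable R G) G) :
    ∃ N : Finset D, N.card < Multiset.card G ∧ ∀ q ∈ G, ∀ y, R y q → y ∈ N := by
  classical
  have hmin : ∀ G' < G, Matchable R G' := fun G' hlt => not_not.mp (hG.not_prop_of_lt hlt)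
  have hfin : ∀ q ∈ G, {y | R y q}.Finite := by
    intro q hq
    by_contra hinf
    apply hG.prop
    simpa [Multiset.cons_erase hq] using (hmin _ (Multiset.erase_lt.mpr hq)).cons_of_infinite hinf
  -- Hall's theorem gives a deficient set of copies of states; by minimality it is all of `G`.
  let t : G → Finset D := fun x => (hfin x Multiset.coe_mem).toFinset
  obtain ⟨s, hs⟩ : ∃ s : Finset G, (s.biUnion t).card < s.card := by
    by_contra! hall
    obtain ⟨f, hf, hft⟩ := (Finset.all_card_le_biUnion_card_iff_exists_injective t).mp hall
    exact hG.prop (matchable_of_injective f hf fun x => by simpa [t] using hft x)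
  let S : Multiset Q := s.val.map fun x : G => (x : Q)
  have hS_nbhd : ∀ q ∈ S, ∀ y, R y q → y ∈ s.biUnion t := by
    intro q hq y hy
    obtain ⟨x, hx, rfl⟩ := Multiset.mem_map.mp hq
    exact Finset.mem_biUnion.mpr ⟨x, hx, by simpa [t] using hy⟩
  have hS_le : S ≤ G := by
    have := Multiset.map_le_map (f := fun x : G => (x : Q)) (Finset.val_le_iff.mpr s.subset_univ)
    rwa [Multiset.map_univ_coe] at this
  have hS_card : Multiset.card S = s.card := by simp [S]
  have hS_eq : S = G := by
    by_contra hne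
    have := (hmin S (lt_of_le_of_ne hS_le hne)).card_le _ hS_nbhd
    omega
  have hG_card : Multiset.card G = s.card := hS_card ▸ congrArg Multiset.card hS_eq.symm
  exact ⟨s.biUnion t, hG_card ▸ hs, fun q hq => hS_nbhd q (by rwa [hS_eq])⟩

theorem exists_blocking_of_not_matchable [DecidableEq Q] {E : Multiset Q}
    (hE : ¬ Matchable R E) :
    ∃ F, F ≤ E ∧ Matchable R F ∧
      ∃ g, g ∈ E - F ∧ ∀ q ∈ F + {g}, ¬ Matchable R (F + {q}) := by
  obtain ⟨G, hGE, hG⟩ := exists_minimal_le_of_wellFoundedLT (fun G => ¬ Matchable R G) E hE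
  obtain ⟨N, hN_card, hN⟩ := exists_card_lt_of_minimal_not_matchable hG
  obtain ⟨g, hg⟩ : ∃ g, g ∈ G :=
    Multiset.exists_mem_of_ne_zero (by rintro rfl; exact hG.prop matchable_zero)
  have hFG : G.erase g + {g} = G := Multiset.add_singleton_eq_iff.mpr ⟨hg, rfl⟩
  refine ⟨G.erase g, (Multiset.erase_le g G).trans hGE,
    not_not.mp (hG.not_prop_of_lt (Multiset.erase_lt.mpr hg)), g, ?_, ?_⟩
  · rw [Multiset.mem_sub, Multiset.count_erase_self]
    have := Multiset.count_le_of_le g hGE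
    have := Multiset.count_pos.mpr hg
    omega
  · rw [hFG]
    intro q hq hmatch
    have hsub : ∀ q' ∈ G.erase g + {q}, q' ∈ G := by
      intro q' hq'
      rcases Multiset.mem_add.mp hq' with h | h
      exacts [Multiset.mem_of_mem_erase h, Multiset.mem_singleton.mp h ▸ hq]
    have := hmatch.card_le N fun q' hq' => hN q' (hsub q' hq')
    rw [Multiset.card_add, Multiset.card_singleton, Multiset.card_erase_add_one hg] at this
    omega

theorem exists_eq_map_graph_of_nodup {m : Multiset (D × Q)}
    (hm : (m.map Prod.fst).Nodup) (f₀ : D → Q) :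
    ∃ f : D → Q, m = (m.map Prod.fst).map (fun d => (d, f d)) ∧
      ∀ d ∉ m.map Prod.fst, f d = f₀ d := by
  classical
  induction m using Multiset.induction_on with
  | empty => exact ⟨f₀, by simp, fun _ _ => rfl⟩
  | cons p m ih =>
    rw [Multiset.map_cons, Multiset.nodup_cons] at hm
    obtain ⟨f, hf, hf₀⟩ := ih hm.2
    refine ⟨Function.update f p.1 p.2, ?_, fun d hd => ?_⟩
    · have hm' : (m.map Prod.fst).map (fun d => (d, Function.update f p.1 p.2 d)) = m := by
        rw [hf]
        refine Multiset.map_congr (congrArg _ hf.symm) fun d hd => ?_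
        rw [Function.update_of_ne (ne_of_mem_of_not_mem hd hm.1)]
      simp [hm']
    · rw [Multiset.map_cons, Multiset.mem_cons, not_or] at hd
      rw [Function.update_of_ne hd.1, hf₀ d hd.2]

end Matching

theorem paritySeq_comp_succ (s : ℕ → ℕ) : ParitySeq (fun k => s (k + 1)) ↔ ParitySeq s := by
  have key : ∀ c, {k | s (k + 1) = c}.Infinite ↔ {k | s k = c}.Infinite := by
    intro c
    rw [← Nat.frequently_atTop_iff_infinite, ← Nat.frequently_atTop_iff_infinite]
    conv_rhs => rw [← Filter.map_add_atTop_eq_nat 1, Filter.frequently_map]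
  simp only [ParitySeq, key]

section SatPBF

variable {D Q : Type} {ch : Set D}

theorem SatPBF.mono {ν ν' : D → Set Q} (h : ∀ d ∈ ch, ν d ⊆ ν' d) :
    ∀ {φ : PBF (EUPair Q)}, SatPBF ch ν φ → SatPBF ch ν' φ
  | .tru, hφ | .fls, hφ => hφ
  | .atom _, ⟨f, hf, m, hm⟩ => ⟨f, fun d hd => h d hd (hf d hd), m, hm⟩
  | .and _ _, ⟨hφ, hψ⟩ => ⟨hφ.mono h, hψ.mono h⟩
  | .or _ _, .inl hφ => .inl (hφ.mono h)
  | .or _ _, .inr hψ => .inr (hψ.mono h)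

theorem satEU_map_some_iff [Nonempty Q] {ν : D → Set (Option Q)} {p : EUPair Q} :
    SatEU ch ν (p.map some) ↔ SatEU ch (fun d => some ⁻¹' ν d) p := by
  constructor
  · rintro ⟨f, hf, m, hnd, hm, hmap, hrest⟩
    obtain ⟨q₀⟩ := ‹Nonempty Q›
    have hsome : ∀ d ∈ ch, some ((f d).getD q₀) = f d := by
      intro d hd
      obtain ⟨q, hq⟩ : ∃ q, some q = f d := by
        by_cases hdm : d ∈ m
        · have := Multiset.mem_map_of_mem f hdm
          rw [hmap] at this
          obtain ⟨q, -, hq⟩ := Multiset.mem_map.mp this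
          exact ⟨q, hq⟩
        · obtain ⟨q, -, hq⟩ := hrest d hd hdm
          exact ⟨q, hq⟩
      rw [← hq]
      rfl
    refine ⟨fun d => (f d).getD q₀, fun d hd => by simpa [hsome d hd] using hf d hd,
      m, hnd, hm, ?_, fun d hd hdm => ?_⟩
    · apply Multiset.map_injective (Option.some_injective Q)
      rw [Multiset.map_map]
      exact (Multiset.map_congr rfl fun d hdm => hsome d (hm d hdm)).trans hmap
    · obtain ⟨q, hq, hfd⟩ := hrest d hd hdm
      show (f d).getD q₀ ∈ p.2
      rw [← hfd]
      exact hq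
  · rintro ⟨f, hf, m, hnd, hm, hmap, hrest⟩
    refine ⟨some ∘ f, hf, m, hnd, hm, ?_, fun d hd hdm => ⟨f d, hrest d hd hdm, rfl⟩⟩
    rw [← Multiset.map_map, hmap]
    rfl

theorem satPBF_map_some_iff [Nonempty Q] {ν : D → Set (Option Q)} :
    ∀ {φ : PBF (EUPair Q)},
      SatPBF ch ν (φ.map (EUPair.map some)) ↔ SatPBF ch (fun d => some ⁻¹' ν d) φ
  | .tru | .fls => Iff.rfl
  | .atom _ => satEU_map_some_iff
  | .and _ _ => and_congr satPBF_map_some_iff satPBF_map_some_iff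
  | .or _ _ => or_congr satPBF_map_some_iff satPBF_map_some_iff

end SatPBF

instance APTA.instNonemptyQ {A : Type} (M : APTA A) : Nonempty M.Q := ⟨M.init⟩

-- so that `rw` and `simp` see `(arrow M qT G).Q` as `Option M.Q` and `(M.withInit q).Q` as `M.Q`
attribute [reducible] arrow APTA.withInit

section Arrow

variable {A D : Type} {M : APTA A} {qT : M.Q} {G : Multiset M.Q} {T : STree D A}

def liftPath {Q : Type} (d : D) (q : Q) (e : List (D × Q)) : List (D × Option Q) :=
  (d, some q) :: e.map (Prod.map id some)

@[simp]
theorem liftPath_append_singleton {Q : Type} (d : D) (q : Q) (e : List (D × Q)) (p : D × Q) :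
    liftPath d q (e ++ [p]) = liftPath d q e ++ [(p.1, some p.2)] := by
  simp [liftPath, Prod.map]

@[simp]
theorem map_fst_liftPath {Q : Type} (d : D) (q : Q) (e : List (D × Q)) :
    (liftPath d q e).map Prod.fst = d :: e.map Prod.fst := by
  simp [liftPath]

theorem arrow_stateOf_liftPath (d : D) (q : M.Q) (e : List (D × M.Q)) :
    (arrow M qT G).stateOf (liftPath d q e) = some ((M.withInit q).stateOf e) := by
  induction e using List.reverseRecOn with
  | nil => rfl
  | append_singleton e p _ =>
    rw [liftPath_append_singleton]
    simp [APTA.stateOf]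

theorem arrow_δ_none (a : A) :
    (arrow M qT G).δ none a = (PBF.atom (G, {qT})).map (EUPair.map some) := by
  simp [arrow, PBF.map, EUPair.map]

theorem accepts_subAt_of_arrow {et : Set (List (D × Option M.Q))}
    (het : (arrow M qT G).IsExecTree T et)
    (hpar : ∀ b : ℕ → D × Option M.Q, (∀ k, (List.range k).map b ∈ et) →
      ParitySeq fun k => (arrow M qT G).ω (b k).2)
    {d : D} {q : M.Q} (hd : [d] ∈ T.nodes) (hq : [(d, some q)] ∈ et) :
    (M.withInit q).Accepts (T.subAt [d] hd) := by
  obtain ⟨hnil, hpre, hnodes, htrans⟩ := het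
  refine ⟨{e | liftPath d q e ∈ et}, ⟨hq, fun e p he => ?_, fun e he => ?_, fun e he => ?_⟩,
    fun b hb => ?_⟩
  · rw [Set.mem_ofPred_eq, liftPath_append_singleton] at he
    exact hpre _ _ he
  · have := hnodes _ he
    rwa [map_fst_liftPath] at this
  · have := htrans _ he
    rw [map_fst_liftPath, arrow_stateOf_liftPath] at this
    refine (satPBF_map_some_iff.mp this).mono fun d' _ q' hq' => ?_
    show liftPath d q (e ++ [(d', q')]) ∈ et
    rwa [liftPath_append_singleton]
  · let b' : ℕ → D × Option M.Q := fun k =>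
      k.casesOn (d, some q) fun k => Prod.map id some (b k)
    have hb' : ∀ k, (List.range k).map b' ∈ et := by
      rintro (_ | k)
      · exact hnil
      · simpa [List.range_succ_eq_map, liftPath, b', Function.comp_def] using hb k
    exact (paritySeq_comp_succ _).mpr (hpar b' hb')

def graftExec {Q : Type} (T : STree D A) (σ : D → Q)
    (ets : ∀ d, [d] ∈ T.nodes → Set (List (D × Q))) : Set (List (D × Option Q)) :=
  {e | e = [] ∨ ∃ d hd, ∃ e' ∈ ets d hd, e = liftPath d (σ d) e'}

theorem exists_lift_of_branch_graftExec {Q : Type} {σ : D → Q}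
    {ets : ∀ d, [d] ∈ T.nodes → Set (List (D × Q))} {b : ℕ → D × Option Q}
    (hb : ∀ k, (List.range k).map b ∈ graftExec T σ ets) :
    ∃ d hd, ∃ b' : ℕ → D × Q, (∀ k, (List.range k).map b' ∈ ets d hd) ∧
      ∀ k, b (k + 1) = Prod.map id some (b' k) := by
  have hstep : ∀ k, ∃ d hd, ∃ e' ∈ ets d hd, b 0 = (d, some (σ d)) ∧
      (List.range k).map (fun i => b (i + 1)) = e'.map (Prod.map id some) := by
    intro k
    obtain h | ⟨d, hd, e', he', heq⟩ := hb (k + 1)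
    · simp at h
    rw [List.range_succ_eq_map, List.map_cons, List.map_map, liftPath, List.cons.injEq] at heq
    exact ⟨d, hd, e', he', heq⟩
  obtain ⟨d, hd, -, -, hb0, -⟩ := hstep 0
  have hstep' : ∀ k, ∃ e' ∈ ets d hd,
      (List.range k).map (fun i => b (i + 1)) = e'.map (Prod.map id some) := by
    intro k
    obtain ⟨d', hd', e', he', hb0', heq⟩ := hstep k
    obtain rfl : d' = d := congrArg Prod.fst (hb0'.symm.trans hb0)
    exact ⟨e', he', heq⟩
  have hlifted : ∀ i, ∃ p, b (i + 1) = Prod.map id some p := by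
    intro i
    obtain ⟨e', -, heq⟩ := hstep' (i + 1)
    have : b (i + 1) ∈ e'.map (Prod.map id some) := heq ▸ List.mem_map.mpr ⟨i, by simp, rfl⟩
    obtain ⟨p, -, hp⟩ := List.mem_map.mp this
    exact ⟨p, hp.symm⟩
  choose b' hb' using hlifted
  refine ⟨d, hd, b', fun k => ?_, hb'⟩
  obtain ⟨e', he', heq⟩ := hstep' k
  have hinj := ((Function.injective_id (α := D)).prodMap (Option.some_injective Q)).list_map
  rwa [← hinj (heq.symm.trans (by simp [hb', Function.comp_def]) :
    e'.map (Prod.map id some) = ((List.range k).map b').map (Prod.map id some))]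

theorem arrow_accepts_of_accepts_subAt (σ : D → M.Q)
    (hroot : SatEU {d | [d] ∈ T.nodes} (fun d => {σ d}) (G, {qT}))
    (hsub : ∀ d (hd : [d] ∈ T.nodes), (M.withInit (σ d)).Accepts (T.subAt [d] hd)) :
    (arrow M qT G).Accepts T := by
  choose ets hets hpar using hsub
  have hlift : ∀ d hd, ∀ e' ∈ ets d hd, liftPath d (σ d) e' ∈ graftExec T σ ets :=
    fun d hd e' he' => Or.inr ⟨d, hd, e', he', rfl⟩
  refine ⟨graftExec T σ ets, ⟨Or.inl rfl, ?_, ?_, ?_⟩, fun b hb => ?_⟩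
  · rintro e p (h | ⟨d, hd, e', he', heq⟩)
    · simp at h
    rcases List.eq_nil_or_concat' e' with rfl | ⟨e'', p', rfl⟩
    · simp only [liftPath, List.map_nil, List.append_eq_singleton_iff] at heq
      exact Or.inl (heq.resolve_right (by simp)).1
    · rw [liftPath_append_singleton] at heq
      obtain ⟨rfl, -⟩ := List.append_inj' heq rfl
      exact hlift d hd e'' ((hets d hd).2.1 _ _ he')
  · rintro e (rfl | ⟨d, hd, e', he', rfl⟩)
    · exact T.root_mem
    · rw [map_fst_liftPath]
      exact (hets d hd).2.2.1 e' he'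
  · rintro e (rfl | ⟨d, hd, e', he', rfl⟩)
    · show SatPBF _ _ ((arrow M qT G).δ none _)
      rw [arrow_δ_none]
      refine satPBF_map_some_iff.mpr (SatPBF.mono ?_ (φ := .atom _) hroot)
      rintro d hd _ rfl
      exact hlift d hd [] (hets d hd).1
    · rw [map_fst_liftPath, arrow_stateOf_liftPath]
      refine satPBF_map_some_iff.mpr (((hets d hd).2.2.2 e' he').mono fun d' _ q hq => ?_)
      have := hlift d hd _ hq
      rwa [liftPath_append_singleton] at this
  · obtain ⟨d, hd, b', hb', hbb'⟩ := exists_lift_of_branch_graftExec hb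
    apply (paritySeq_comp_succ _).mp
    simp only [hbb']
    exact hpar d hd b' hb'

theorem exists_witness_of_arrow_accepts (h : (arrow M qT G).Accepts T) :
    ∃ m, Witness M T G m := by
  obtain ⟨et, het, hpar⟩ := h
  have hroot := het.2.2.2 [] het.1
  rw [show (arrow M qT G).stateOf [] = none from rfl, arrow_δ_none] at hroot
  obtain ⟨f, hf, ms, hnd, hms, hmap, -⟩ := satPBF_map_some_iff.mp hroot
  refine ⟨ms.map fun d => (d, f d), by simpa [Multiset.map_map] using hnd,
    by simpa [Multiset.map_map] using hmap, ?_⟩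
  simp only [Multiset.mem_map]
  rintro _ ⟨d, hd, rfl⟩
  exact ⟨hms d hd, accepts_subAt_of_arrow het hpar (hms d hd) (hf d (hms d hd))⟩

theorem arrow_accepts_of_witness
    (hqT : ∀ (D' : Type) (T' : STree D' A), (M.withInit qT).Accepts T')
    {m : Multiset (D × M.Q)} (hm : Witness M T G m) : (arrow M qT G).Accepts T := by
  obtain ⟨hnd, hsnd, hacc⟩ := hm
  obtain ⟨σ, hσ, hσ_qT⟩ := exists_eq_map_graph_of_nodup hnd fun _ => qT
  have hσm : ∀ p ∈ m, σ p.1 = p.2 := by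
    intro p hp
    rw [hσ] at hp
    obtain ⟨d, -, rfl⟩ := Multiset.mem_map.mp hp
    rfl
  refine arrow_accepts_of_accepts_subAt σ
    ⟨σ, fun d _ => rfl, m.map Prod.fst, hnd, ?_, ?_, fun d _ hd => hσ_qT d hd⟩ fun d hd => ?_
  · simp only [Multiset.mem_map]
    rintro _ ⟨p, hp, rfl⟩
    exact (hacc p hp).1
  · rw [← hsnd, Multiset.map_map]
    exact Multiset.map_congr rfl hσm
  · by_cases hdm : d ∈ m.map Prod.fst
    · obtain ⟨p, hp, rfl⟩ := Multiset.mem_map.mp hdm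
      rw [hσm p hp]
      exact (hacc p hp).2
    · rw [hσ_qT d hdm]
      exact hqT D _

theorem arrow_accepts_iff_exists_witness
    (hqT : ∀ (D' : Type) (T' : STree D' A), (M.withInit qT).Accepts T') :
    (arrow M qT G).Accepts T ↔ ∃ m, Witness M T G m :=
  ⟨exists_witness_of_arrow_accepts, fun ⟨_, hm⟩ => arrow_accepts_of_witness hqT hm⟩

end Arrow

/-- if `T` is not accepted by `A_{▷E}`, then there is a blocking pair
`(F,g)` such that for every minimal accepting execution tree of `A_{▷F}` on `T`
(given by its root-level witness `m`), every successor `y` marked `q⊤` (i.e. not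
used by `m`) has its subtree rejected by `A_{g'}` for every `g' ∈ F ⊎ {g}`. -/
theorem stmt9 (A D : Type) (M : APTA A) [DecidableEq M.Q] (qT : M.Q)
    (hqT : ∀ (D' : Type) (T' : STree D' A), (M.withInit qT).Accepts T')
    (T : STree D A) (E : Multiset M.Q)
    (h : ¬ (arrow M qT E).Accepts T) :
    ∃ F, F ≤ E ∧ ∃ g, g ∈ E - F ∧
      (arrow M qT F).Accepts T ∧ ¬ (arrow M qT (F + {g})).Accepts T ∧
      ∀ m : Multiset (D × M.Q), Witness M T F m →
        ∀ y : D, [y] ∈ T.nodes → y ∉ m.map Prod.fst →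
          ∀ g' ∈ F + {g}, ¬ AccChild M g' T y := by
  have hwit := fun G => arrow_accepts_iff_exists_witness (T := T) (G := G) hqT
  obtain ⟨F, hFE, hF, g, hgEF, hblock⟩ :=
    exists_blocking_of_not_matchable (R := fun y q => AccChild M q T y) (mt (hwit E).mpr h)
  refine ⟨F, hFE, g, hgEF, (hwit F).mpr hF,
    fun hacc => hblock g (by simp) ((hwit _).mp hacc), ?_⟩
  intro m hm y _ hym g' hg' hacc
  refine hblock g' hg' ⟨(y, g') ::ₘ m, ?_⟩
  rw [add_comm, Multiset.singleton_add]
  exact IsMatching.cons hm hym hacc
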